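/- On the warped product metric g = ds² + ψ(s)²dθ² with ψ(s) = tanh s, the radial vector field V = w(s)∂_s satisfies L_V g = 2w'ds² + 2wψψ'dθ² and L_V L_V g = (2ww'' + 4(w')²)ds² + (2ww'ψψ' + 2w²((ψ')² + ψψ''))dθ². Moreover, on a region where w, w', ψ, ψ' are nonvanishing, V is mixed Killing (L_V L_V g = f·L_V g for some function f) if and only if w² = Aψ² + B for constants A, B ∈ ℝ. -/

import Mathlib

open Real

noncomputable section

/-- Coordinate partial derivative on `ℝ²`. -/
def pd (i : Fin 2) (f : (Fin 2 → ℝ) → ℝ) (p : Fin 2 → ℝ) : ℝ :=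
  fderiv ℝ f p (Pi.single i 1)

/-- Coordinate Lie derivative of a metric `g` along `V` on `ℝ²`. -/
def lieDeriv (V : (Fin 2 → ℝ) → (Fin 2 → ℝ))
    (g : (Fin 2 → ℝ) → Matrix (Fin 2) (Fin 2) ℝ) (p : Fin 2 → ℝ) :
    Matrix (Fin 2) (Fin 2) ℝ :=
  fun i j =>
    (∑ k, V p k * pd k (fun q => g q i j) p)
      + (∑ k, g p k j * pd i (fun q => V q k) p)
      + (∑ k, g p i k * pd j (fun q => V q k) p)

/-- The cigar metric `g = ds² + tanh²(s) dθ²` in geodesic polar coordinates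
`p = (s, θ)` on `(0,∞) × S¹` (with `θ` a `2π`-periodic coordinate). -/
def cigarWarp : (Fin 2 → ℝ) → Matrix (Fin 2) (Fin 2) ℝ :=
  fun p i j =>
    if i = 0 ∧ j = 0 then 1
    else if i = 1 ∧ j = 1 then Real.tanh (p 0) ^ 2
    else 0

lemma pd_eval (h : ℝ → ℝ) (p : Fin 2 → ℝ) (hh : DifferentiableAt ℝ h (p 0)) (k : Fin 2) :
    pd k (fun q => h (q 0)) p = deriv h (p 0) * (Pi.single k 1 : Fin 2 → ℝ) 0 := by
  have hl : HasFDerivAt (fun q : Fin 2 → ℝ => q 0)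
      (ContinuousLinearMap.proj 0 : (Fin 2 → ℝ) →L[ℝ] ℝ) p :=
    (ContinuousLinearMap.proj 0 : (Fin 2 → ℝ) →L[ℝ] ℝ).hasFDerivAt
  have H := hh.hasDerivAt.comp_hasFDerivAt p hl
  have H' : HasFDerivAt (fun q : Fin 2 → ℝ => h (q 0))
      (deriv h (p 0) • (ContinuousLinearMap.proj 0 : (Fin 2 → ℝ) →L[ℝ] ℝ)) p := H
  rw [pd, H'.fderiv]
  simp [mul_comm]

lemma pd_const (c : ℝ) (p : Fin 2 → ℝ) (k : Fin 2) : pd k (fun _ => c) p = 0 := by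
  rw [pd, fderiv_fun_const]
  simp

example (p : Fin 2 → ℝ) : (Pi.single (0:Fin 2) 1 : Fin 2 → ℝ) 0 = 1 ∧ (Pi.single (1:Fin 2) 1 : Fin 2 → ℝ) 0 = 0 := by
  constructor <;> simp

lemma lieDeriv_radial (w a b : ℝ → ℝ)
    (ha : Differentiable ℝ a) (hb : Differentiable ℝ b) (hwd : Differentiable ℝ w)
    (V : (Fin 2 → ℝ) → (Fin 2 → ℝ)) (hV : ∀ p, V p = ![w (p 0), 0])
    (g : (Fin 2 → ℝ) → Matrix (Fin 2) (Fin 2) ℝ)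
    (hg : g = fun p i j =>
      if i = 0 ∧ j = 0 then a (p 0) else if i = 1 ∧ j = 1 then b (p 0) else 0)
    (p : Fin 2 → ℝ) (i j : Fin 2) :
    lieDeriv V g p i j =
      if i = 0 ∧ j = 0 then w (p 0) * deriv a (p 0) + 2 * a (p 0) * deriv w (p 0)
      else if i = 1 ∧ j = 1 then w (p 0) * deriv b (p 0) else 0 := by
  have hV0 : (fun q => V q 0) = fun q => w (q 0) := funext fun q => by rw [hV]; rfl
  have hV1 : (fun q => V q 1) = fun _ => (0:ℝ) := funext fun q => by rw [hV]; rfl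
  have hVp0 : V p 0 = w (p 0) := by rw [hV]; rfl
  have hVp1 : V p 1 = 0 := by rw [hV]; rfl
  subst hg
  fin_cases i <;> fin_cases j <;>
    simp [lieDeriv, Fin.sum_univ_two, hV0, hV1, hVp0, hVp1, pd_const,
      pd_eval a p (ha _), pd_eval b p (hb _), pd_eval w p (hwd _),
      pd_eval (fun _ => (0:ℝ)) p (differentiable_const 0 _)] <;> ring

lemma contDiff_tanh : ContDiff ℝ (⊤ : ℕ∞) Real.tanh := by
  have : Real.tanh = fun x => Real.sinh x / Real.cosh x := funext Real.tanh_eq_sinh_div_cosh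
  rw [this]
  exact Real.contDiff_sinh.div Real.contDiff_cosh fun x => (Real.cosh_pos x).ne'

lemma diff_of_contDiff {w : ℝ → ℝ} (hw : ContDiff ℝ (⊤ : ℕ∞) w) :
    Differentiable ℝ w ∧ Differentiable ℝ (deriv w) := by
  have h := contDiff_succ_iff_deriv.mp (hw.of_le (by exact WithTop.coe_le_coe.mpr (le_top : (1+1 : ℕ∞) ≤ ⊤) : (1+1 : WithTop ℕ∞) ≤ ((⊤ : ℕ∞) : WithTop ℕ∞)))
  exact ⟨h.1, h.2.2.differentiable one_ne_zero⟩

lemma hasDerivAt_tanh' (x : ℝ) : HasDerivAt Real.tanh (1 / Real.cosh x ^ 2) x := by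
  have h := (Real.hasDerivAt_sinh x).fun_div (Real.hasDerivAt_cosh x) (Real.cosh_pos x).ne'
  have e : (fun y => Real.sinh y / Real.cosh y) = Real.tanh :=
    funext fun y => (Real.tanh_eq_sinh_div_cosh y).symm
  rw [e] at h
  refine h.congr_deriv ?_
  have := Real.cosh_sq_sub_sinh_sq x
  field_simp
  nlinarith [this]

lemma deriv_tanh_pos (x : ℝ) : 0 < deriv Real.tanh x := by
  rw [(hasDerivAt_tanh' x).deriv]
  positivity

lemma tanh_pos {x : ℝ} (hx : 0 < x) : 0 < Real.tanh x := by
  rw [Real.tanh_eq_sinh_div_cosh]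
  exact div_pos (Real.sinh_pos_iff.mpr hx) (Real.cosh_pos x)

lemma part1 (w : ℝ → ℝ) (hw : ContDiff ℝ (⊤ : ℕ∞) w)
    (V : (Fin 2 → ℝ) → (Fin 2 → ℝ)) (hV : ∀ p, V p = ![w (p 0), 0])
    (p : Fin 2 → ℝ) (i j : Fin 2) :
    lieDeriv V cigarWarp p i j =
      (if i = 0 ∧ j = 0 then 2 * deriv w (p 0)
       else if i = 1 ∧ j = 1 then
         2 * w (p 0) * Real.tanh (p 0) * deriv Real.tanh (p 0)
       else 0) := by
  have hT := (diff_of_contDiff contDiff_tanh).1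
  have key := lieDeriv_radial w (fun _ => 1) (fun s => Real.tanh s ^ 2)
    (differentiable_const 1) (fun s => ((hT s).hasDerivAt.pow 2).differentiableAt)
    (diff_of_contDiff hw).1 V hV cigarWarp rfl p i j
  rw [key]
  have hb : deriv (fun s => Real.tanh s ^ 2) (p 0)
      = 2 * Real.tanh (p 0) * deriv Real.tanh (p 0) := by
    rw [((hT (p 0)).hasDerivAt.fun_pow 2).deriv]
    ring
  rw [hb, deriv_const]
  split_ifs <;> ring

lemma part2 (w : ℝ → ℝ) (hw : ContDiff ℝ (⊤ : ℕ∞) w)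
    (V : (Fin 2 → ℝ) → (Fin 2 → ℝ)) (hV : ∀ p, V p = ![w (p 0), 0])
    (p : Fin 2 → ℝ) (i j : Fin 2) :
    lieDeriv V (lieDeriv V cigarWarp) p i j =
      (if i = 0 ∧ j = 0 then
         2 * w (p 0) * deriv (deriv w) (p 0) + 4 * (deriv w (p 0)) ^ 2
       else if i = 1 ∧ j = 1 then
         2 * w (p 0) * deriv w (p 0) * Real.tanh (p 0) * deriv Real.tanh (p 0)
           + 2 * w (p 0) ^ 2 *
               ((deriv Real.tanh (p 0)) ^ 2
                 + Real.tanh (p 0) * deriv (deriv Real.tanh) (p 0))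
       else 0) := by
  have hT := diff_of_contDiff contDiff_tanh
  have hW := diff_of_contDiff hw
  have hL : lieDeriv V cigarWarp = fun p i j =>
      if i = 0 ∧ j = 0 then (fun s => 2 * deriv w s) (p 0)
      else if i = 1 ∧ j = 1 then
        (fun s => 2 * w s * Real.tanh s * deriv Real.tanh s) (p 0)
      else 0 := by
    funext q i j
    exact part1 w hw V hV q i j
  have hb1 : ∀ s, HasDerivAt (fun s => 2 * w s * Real.tanh s * deriv Real.tanh s)
      ((2 * deriv w s * Real.tanh s + 2 * w s * deriv Real.tanh s) * deriv Real.tanh s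
        + 2 * w s * Real.tanh s * deriv (deriv Real.tanh) s) s := by
    intro s
    exact ((((hW.1 s).hasDerivAt.const_mul 2).mul (hT.1 s).hasDerivAt).mul
      (hT.2 s).hasDerivAt)
  have ha1 : ∀ s, HasDerivAt (fun s => 2 * deriv w s) (2 * deriv (deriv w) s) s :=
    fun s => (hW.2 s).hasDerivAt.const_mul 2
  have key := lieDeriv_radial w (fun s => 2 * deriv w s)
    (fun s => 2 * w s * Real.tanh s * deriv Real.tanh s)
    (fun s => (ha1 s).differentiableAt) (fun s => (hb1 s).differentiableAt)
    hW.1 V hV _ hL p i j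
  rw [key, (ha1 (p 0)).deriv, (hb1 (p 0)).deriv]
  split_ifs <;> ring

lemma deriv_congr_of_eqOn {f g : ℝ → ℝ} {S : Set ℝ} (hS : IsOpen S)
    (h : ∀ x ∈ S, f x = g x) {s : ℝ} (hs : s ∈ S) : deriv f s = deriv g s :=
  Filter.EventuallyEq.deriv_eq (Filter.eventually_of_mem (hS.mem_nhds hs) h)

lemma const_on {S : Set ℝ} (hSo : IsOpen S) (hSc : IsPreconnected S) {g : ℝ → ℝ}
    (hg : ∀ x ∈ S, HasDerivAt g 0 x) {x y : ℝ} (hx : x ∈ S) (hy : y ∈ S) : g x = g y := by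
  have hconv : Convex ℝ S := convex_iff_ordConnected.mpr hSc.ordConnected
  refine hconv.is_const_of_fderivWithin_eq_zero
    (fun z hz => (hg z hz).differentiableAt.differentiableWithinAt) (fun z hz => ?_) hx hy
  rw [fderivWithin_of_isOpen hSo hz, (hg z hz).hasFDerivAt.fderiv]
  ext v
  simp

/-- For `V = w(s) ∂_s` on the cigar metric `ds² + tanh²(s)dθ²`
(`ψ = tanh`): `L_V g = 2w' ds² + 2wψψ' dθ²`,
`L_V L_V g = (2ww'' + 4(w')²) ds² + (2ww'ψψ' + 2w²((ψ')² + ψψ'')) dθ²`, and on an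
open connected region `S ⊆ (0,∞)` where `w` and `w'` do not vanish, `V` is mixed
Killing iff `w² = A ψ² + B` for constants `A, B ∈ ℝ`. -/
theorem radial_mixedKilling (w : ℝ → ℝ) (hw : ContDiff ℝ (⊤ : ℕ∞) w)
    (V : (Fin 2 → ℝ) → (Fin 2 → ℝ)) (hV : ∀ p, V p = ![w (p 0), 0])
    (S : Set ℝ) (hSopen : IsOpen S) (hSconn : IsPreconnected S)
    (hSsub : S ⊆ Set.Ioi (0 : ℝ))
    (hnz : ∀ s ∈ S, w s ≠ 0 ∧ deriv w s ≠ 0) :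
    (∀ p : Fin 2 → ℝ, 0 < p 0 → ∀ i j : Fin 2,
        lieDeriv V cigarWarp p i j =
          (if i = 0 ∧ j = 0 then 2 * deriv w (p 0)
           else if i = 1 ∧ j = 1 then
             2 * w (p 0) * Real.tanh (p 0) * deriv Real.tanh (p 0)
           else 0)) ∧
    (∀ p : Fin 2 → ℝ, 0 < p 0 → ∀ i j : Fin 2,
        lieDeriv V (lieDeriv V cigarWarp) p i j =
          (if i = 0 ∧ j = 0 then
             2 * w (p 0) * deriv (deriv w) (p 0) + 4 * (deriv w (p 0)) ^ 2
           else if i = 1 ∧ j = 1 then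
             2 * w (p 0) * deriv w (p 0) * Real.tanh (p 0) * deriv Real.tanh (p 0)
               + 2 * w (p 0) ^ 2 *
                   ((deriv Real.tanh (p 0)) ^ 2
                     + Real.tanh (p 0) * deriv (deriv Real.tanh) (p 0))
           else 0)) ∧
    ((∃ f : (Fin 2 → ℝ) → ℝ, ∀ p : Fin 2 → ℝ, p 0 ∈ S →
        lieDeriv V (lieDeriv V cigarWarp) p = f p • lieDeriv V cigarWarp p)
      ↔ (∃ A B : ℝ, ∀ s ∈ S, w s ^ 2 = A * Real.tanh s ^ 2 + B)) := by
  have hT := diff_of_contDiff contDiff_tanh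
  have hW := diff_of_contDiff hw
  refine ⟨fun p _ i j => part1 w hw V hV p i j,
          fun p _ i j => part2 w hw V hV p i j, ?_⟩
  -- notation
  have hvne : ∀ s ∈ S, Real.tanh s * deriv Real.tanh s ≠ 0 := fun s hs =>
    mul_ne_zero (tanh_pos (hSsub hs)).ne' (deriv_tanh_pos s).ne'
  have hu : ∀ s : ℝ, HasDerivAt (fun t => w t * deriv w t)
      (deriv w s * deriv w s + w s * deriv (deriv w) s) s :=
    fun s => (hW.1 s).hasDerivAt.mul (hW.2 s).hasDerivAt
  have hv : ∀ s : ℝ, HasDerivAt (fun t => Real.tanh t * deriv Real.tanh t)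
      (deriv Real.tanh s * deriv Real.tanh s + Real.tanh s * deriv (deriv Real.tanh) s) s :=
    fun s => (hT.1 s).hasDerivAt.mul (hT.2 s).hasDerivAt
  constructor
  · rintro ⟨f, hf⟩
    rcases S.eq_empty_or_nonempty with hE | ⟨s₀, hs₀⟩
    · exact ⟨0, 0, fun s hs => by simp [hE] at hs⟩
    -- key pointwise identity: u' v = u v'
    have key : ∀ s ∈ S,
        (deriv w s * deriv w s + w s * deriv (deriv w) s)
            * (Real.tanh s * deriv Real.tanh s)
          = (w s * deriv w s)
            * (deriv Real.tanh s * deriv Real.tanh s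
                + Real.tanh s * deriv (deriv Real.tanh) s) := by
      intro s hs
      set p : Fin 2 → ℝ := fun _ => s with hp
      have hp0 : p 0 = s := rfl
      have h00 := congrFun (congrFun (hf p hs) 0) 0
      have h11 := congrFun (congrFun (hf p hs) 1) 1
      rw [part2 w hw V hV, Matrix.smul_apply, part1 w hw V hV, smul_eq_mul] at h00 h11
      simp only [hp0] at h00 h11
      norm_num at h00 h11
      have hwne := (hnz s hs).1
      have hwne' := (hnz s hs).2
      have cross : (2 * w s * deriv w s * Real.tanh s * deriv Real.tanh s
            + 2 * w s ^ 2 * ((deriv Real.tanh s) ^ 2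
                + Real.tanh s * deriv (deriv Real.tanh) s)) * (2 * deriv w s)
          = (2 * w s * deriv (deriv w) s + 4 * (deriv w s) ^ 2)
              * (2 * w s * Real.tanh s * deriv Real.tanh s) := by
        linear_combination (2 * deriv w s) * h11
          - (2 * w s * Real.tanh s * deriv Real.tanh s) * h00
      have hw4 : (4 : ℝ) * w s ≠ 0 := mul_ne_zero (by norm_num) hwne
      apply mul_left_cancel₀ hw4
      linear_combination (-1 : ℝ) * cross
    have hphi : ∀ s ∈ S,
        HasDerivAt (fun t => w t * deriv w t / (Real.tanh t * deriv Real.tanh t)) 0 s := by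
      intro s hs
      have h := (hu s).fun_div (hv s) (hvne s hs)
      refine h.congr_deriv (Eq.symm ?_)
      rw [eq_comm, div_eq_zero_iff]
      left
      linear_combination key s hs
    set A := w s₀ * deriv w s₀ / (Real.tanh s₀ * deriv Real.tanh s₀) with hA
    have hAeq : ∀ s ∈ S, w s * deriv w s = A * (Real.tanh s * deriv Real.tanh s) := by
      intro s hs
      have hc := const_on hSopen hSconn hphi hs hs₀
      rw [← hA] at hc
      rw [div_eq_iff (hvne s hs)] at hc
      linarith [hc]
    have hchi : ∀ s ∈ S,
        HasDerivAt (fun t => w t ^ 2 - A * Real.tanh t ^ 2) 0 s := by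
      intro s hs
      have h := (((hW.1 s).hasDerivAt.fun_pow 2)).sub (((hT.1 s).hasDerivAt.fun_pow 2).const_mul A)
      refine h.congr_deriv (Eq.symm ?_)
      push_cast
      have := hAeq s hs
      ring_nf
      ring_nf at this
      linarith
    refine ⟨A, w s₀ ^ 2 - A * Real.tanh s₀ ^ 2, fun s hs => ?_⟩
    have hc := const_on hSopen hSconn hchi hs hs₀
    linarith [hc]
  · rintro ⟨A, B, h⟩
    refine ⟨fun p => (w (p 0) * deriv (deriv w) (p 0) + 2 * deriv w (p 0) ^ 2)
        / deriv w (p 0), fun p hp => ?_⟩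
    have e1 : ∀ s ∈ S, w s * deriv w s = A * (Real.tanh s * deriv Real.tanh s) := by
      intro s hs
      have d := deriv_congr_of_eqOn hSopen
        (f := fun t => w t ^ 2) (g := fun t => A * Real.tanh t ^ 2 + B) h hs
      rw [((hW.1 s).hasDerivAt.fun_pow 2).deriv,
        ((((hT.1 s).hasDerivAt.fun_pow 2).const_mul A).add_const B).deriv] at d
      push_cast at d
      nlinarith [d]
    have e2 : ∀ s ∈ S,
        deriv w s * deriv w s + w s * deriv (deriv w) s
          = A * (deriv Real.tanh s * deriv Real.tanh s
              + Real.tanh s * deriv (deriv Real.tanh) s) := by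
      intro s hs
      have d := deriv_congr_of_eqOn hSopen e1 hs
      rw [(hu s).deriv, ((hv s).const_mul A).deriv] at d
      exact d
    funext i j
    rw [part2 w hw V hV p i j, Matrix.smul_apply, part1 w hw V hV p i j, smul_eq_mul]
    have hwne := (hnz _ hp).1
    have hwne' := (hnz _ hp).2
    split_ifs with h1 h2
    · field_simp
      ring
    · rw [div_mul_eq_mul_div, eq_div_iff hwne']
      linear_combination (-2 * w (p 0) * (Real.tanh (p 0) * deriv Real.tanh (p 0))) * e2 (p 0) hp
        + 2 * w (p 0) * (deriv Real.tanh (p 0) ^ 2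
            + Real.tanh (p 0) * deriv (deriv Real.tanh) (p 0)) * e1 (p 0) hp
    · ring
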